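/- Let a < b be real numbers, X and Y Hausdorff locally convex spaces with Y sequentially complete. If f ∈ C([a,b];X) and α : [a,b] → L(X;Y) is of bounded semivariation, then f is Riemann–Stieltjes integrable with respect to α, and the linear map I_α : C([a,b];X) → Y, I_α(g) := ∫_a^b g(s) dα(s), is continuous; in fact, for every continuous seminorm q on Y there is a continuous seminorm p on X with SV_{q,p}(α) < ∞ and q(∫_a^b f(s) dα(s)) ≤ SV_{q,p}(α) · sup_{s∈[a,b]} p(f(s)). -/

import Mathlib

open Filter Topology Set Classical
open scoped ENNReal

/-- A partition `a = d₀ < d₁ < ⋯ < dₙ = b` of the interval `[a,b]`. -/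
structure RSPartition (a b : ℝ) where
  n : ℕ
  points : ℕ → ℝ
  first_eq : points 0 = a
  last_eq : points n = b
  increasing : ∀ i, i < n → points i < points (i + 1)

section Defs

variable {X Y U : Type*}
variable [AddCommGroup X] [Module ℝ X] [UniformSpace X] [IsUniformAddGroup X] [ContinuousSMul ℝ X]
variable [AddCommGroup Y] [Module ℝ Y] [UniformSpace Y] [IsUniformAddGroup Y] [ContinuousSMul ℝ Y]
variable [AddCommGroup U] [Module ℝ U] [UniformSpace U] [IsUniformAddGroup U] [ContinuousSMul ℝ U]

/-- The semivariation `SV_{q,p}(α)` of `α : [a,b] → L(X;Y)` (value in `ℝ≥0∞`). -/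
noncomputable def SV (α : ℝ → X →L[ℝ] Y) (q : Seminorm ℝ Y) (p : Seminorm ℝ X)
    (a b : ℝ) : ℝ≥0∞ :=
  ⨆ (d : RSPartition a b) (x : ℕ → X) (_ : ∀ i, i < d.n → p (x i) ≤ 1),
    ENNReal.ofReal
      (q (∑ i ∈ Finset.range d.n,
        (α (d.points (i + 1)) (x i) - α (d.points i) (x i))))

/-- `α : [a,b] → L(X;Y)` is of bounded semivariation. -/
def BoundedSemivariation (α : ℝ → X →L[ℝ] Y) (a b : ℝ) : Prop :=
  ∀ q : Seminorm ℝ Y, Continuous ⇑q →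
    ∃ p : Seminorm ℝ X, Continuous ⇑p ∧ SV α q p a b < ⊤

/-- `y` is the Riemann–Stieltjes integral `∫_a^b f dα`. -/
def IsRSIntegral (α : ℝ → X →L[ℝ] Y) (f : ℝ → X) (a b : ℝ) (y : Y) : Prop :=
  ∀ q : Seminorm ℝ Y, Continuous ⇑q → ∀ ε : ℝ, 0 < ε → ∃ δ : ℝ, 0 < δ ∧
    ∀ (d : RSPartition a b) (c : ℕ → ℝ),
      (∀ i, i < d.n → d.points (i + 1) - d.points i < δ) →
      (∀ i, i < d.n → c i ∈ Set.Icc (d.points i) (d.points (i + 1))) →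
      q ((∑ i ∈ Finset.range d.n,
        (α (d.points (i + 1)) (f (c i)) - α (d.points i) (f (c i)))) - y) < ε

/-- The Riemann–Stieltjes integral `∫_a^b f dα` (junk value `0` if it does not exist). -/
noncomputable def RSIntegral (α : ℝ → X →L[ℝ] Y) (f : ℝ → X) (a b : ℝ) : Y :=
  if h : ∃ y, IsRSIntegral α f a b y then h.choose else 0

/-- `y` is the Riemann integral `∫_a^b f(s) ds`. -/
def IsRiemannIntegral (f : ℝ → X) (a b : ℝ) (y : X) : Prop :=
  ∀ q : Seminorm ℝ X, Continuous ⇑q → ∀ ε : ℝ, 0 < ε → ∃ δ : ℝ, 0 < δ ∧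
    ∀ (d : RSPartition a b) (c : ℕ → ℝ),
      (∀ i, i < d.n → d.points (i + 1) - d.points i < δ) →
      (∀ i, i < d.n → c i ∈ Set.Icc (d.points i) (d.points (i + 1))) →
      q ((∑ i ∈ Finset.range d.n, (d.points (i + 1) - d.points i) • f (c i)) - y) < ε

/-- The Riemann integral `∫_a^b f(s) ds` (junk value `0` if it does not exist). -/
noncomputable def riemannIntegral (f : ℝ → X) (a b : ℝ) : X :=
  if h : ∃ y, IsRiemannIntegral f a b y then h.choose else 0

/-- Sequential completeness: every Cauchy sequence converges. -/
def SequentiallyComplete (Z : Type*) [UniformSpace Z] : Prop :=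
  ∀ u : ℕ → Z, CauchySeq u → ∃ z, Filter.Tendsto u Filter.atTop (𝓝 z)

/-- A strongly continuous, locally equicontinuous semigroup. -/
def IsSCLESemigroup (T : ℝ → X →L[ℝ] X) : Prop :=
  T 0 = ContinuousLinearMap.id ℝ X ∧
  (∀ s t : ℝ, 0 ≤ s → 0 ≤ t → T (s + t) = (T s).comp (T t)) ∧
  (∀ x : X, ContinuousOn (fun t => T t x) (Set.Ici (0:ℝ))) ∧
  (∀ q : Seminorm ℝ X, Continuous ⇑q → ∀ t₀ : ℝ, 0 ≤ t₀ →
    ∃ p : Seminorm ℝ X, Continuous ⇑p ∧ ∃ C : ℝ, 0 ≤ C ∧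
      ∀ t ∈ Set.Icc (0:ℝ) t₀, ∀ x : X, q (T t x) ≤ C * p x)

/-- A strongly continuous, quasi-equicontinuous semigroup. -/
def IsSCQESemigroup (T : ℝ → X →L[ℝ] X) : Prop :=
  T 0 = ContinuousLinearMap.id ℝ X ∧
  (∀ s t : ℝ, 0 ≤ s → 0 ≤ t → T (s + t) = (T s).comp (T t)) ∧
  (∀ x : X, ContinuousOn (fun t => T t x) (Set.Ici (0:ℝ))) ∧
  (∃ ω : ℝ, ∀ q : Seminorm ℝ X, Continuous ⇑q →
    ∃ p : Seminorm ℝ X, Continuous ⇑p ∧ ∃ C : ℝ, 0 ≤ C ∧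
      ∀ t : ℝ, 0 ≤ t → ∀ x : X, q (Real.exp (-ω * t) • T t x) ≤ C * p x)

/-- The domain of the generator of a semigroup. -/
def genDomain (T : ℝ → X →L[ℝ] X) : Set X :=
  {x | ∃ y : X, Filter.Tendsto (fun t : ℝ => t⁻¹ • (T t x - x)) (𝓝[>] (0:ℝ)) (𝓝 y)}

/-- The generator of a semigroup (junk value `0` outside of its domain). -/
noncomputable def generator (T : ℝ → X →L[ℝ] X) (x : X) : X :=
  if h : ∃ y : X, Filter.Tendsto (fun t : ℝ => t⁻¹ • (T t x - x)) (𝓝[>] (0:ℝ)) (𝓝 y)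
  then h.choose else 0

/-- The convolution `(T∗f)(t) = ∫_0^t T(t-s) f(s) ds`. -/
noncomputable def sgConv (T : ℝ → X →L[ℝ] X) (f : ℝ → X) (t : ℝ) : X :=
  riemannIntegral (fun s => T (t - s) (f s)) 0 t

/-- `v` is the derivative of `u` at `t` within the set `s` (limit of difference quotients). -/
def HasDerivWithinSetLC (u : ℝ → X) (v : X) (s : Set ℝ) (t : ℝ) : Prop :=
  Filter.Tendsto (fun h : ℝ => h⁻¹ • (u (t + h) - u t))
    (𝓝[{h : ℝ | h ≠ 0 ∧ t + h ∈ s}] (0:ℝ)) (𝓝 v)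

/-- `u` is continuously differentiable on `s` with derivative `u'`. -/
def IsC1On (u u' : ℝ → X) (s : Set ℝ) : Prop :=
  ContinuousOn u s ∧ ContinuousOn u' s ∧ ∀ t ∈ s, HasDerivWithinSetLC u (u' t) s t

/-- `u` is a strict solution of `u' = Au + g` on `[0,r]`, `u(0) = x`. -/
def IsStrictSolution (T : ℝ → X →L[ℝ] X) (g : ℝ → X) (x : X) (r : ℝ) (u : ℝ → X) : Prop :=
  u 0 = x ∧ (∀ t ∈ Set.Icc (0:ℝ) r, u t ∈ genDomain T) ∧
  ∃ u' : ℝ → X, IsC1On u u' (Set.Icc (0:ℝ) r) ∧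
    ∀ t ∈ Set.Icc (0:ℝ) r, u' t = generator T (u t) + g t

/-- `(T(t))` satisfies C-maximal regularity for `(B,r)`. -/
def CMaxReg (T : ℝ → X →L[ℝ] X) (B : U →L[ℝ] X) (r : ℝ) : Prop :=
  ∀ f : ℝ → U, ContinuousOn f (Set.Icc (0:ℝ) r) →
    (∀ t ∈ Set.Icc (0:ℝ) r, sgConv T (fun s => B (f s)) t ∈ genDomain T) ∧
    ContinuousOn (fun t => generator T (sgConv T (fun s => B (f s)) t)) (Set.Icc (0:ℝ) r)

end Defs

/-!
On a common refinement of two fine tagged partitions, the difference of the two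
Riemann–Stieltjes sums becomes a single sum `∑ (α(eⱼ₊₁) - α(eⱼ)) xⱼ` whose values
`xⱼ = f(c) - f(c')` are `p`-small by uniform continuity of `f`, so its `q`-seminorm is at most
`SV_{q,p}(α) · maxⱼ p(xⱼ)`. Hence the sums satisfy a Cauchy criterion; the sums over uniform
partitions converge by sequential completeness, their limit is the integral, and the bound
`q(S) ≤ SV_{q,p}(α) · sup p(f)`, valid for every sum `S`, passes to the limit.
-/

namespace RSPartition

variable {a b : ℝ} (d : RSPartition a b)

theorem strictMonoOn_points : StrictMonoOn d.points (Iic d.n) :=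
  strictMonoOn_Iic_of_lt_succ fun i hi => by simpa using d.increasing i hi

theorem points_le_points_iff {i j : ℕ} (hi : i ≤ d.n) (hj : j ≤ d.n) :
    d.points i ≤ d.points j ↔ i ≤ j :=
  d.strictMonoOn_points.le_iff_le hi hj

theorem points_lt_points_iff {i j : ℕ} (hi : i ≤ d.n) (hj : j ≤ d.n) :
    d.points i < d.points j ↔ i < j :=
  d.strictMonoOn_points.lt_iff_lt hi hj

theorem points_mem_Icc {i : ℕ} (hi : i ≤ d.n) : d.points i ∈ Icc a b := by
  constructor
  · simpa [d.first_eq] using (d.points_le_points_iff (Nat.zero_le _) hi).2 (Nat.zero_le i)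
  · simpa [d.last_eq] using (d.points_le_points_iff hi le_rfl).2 hi

def MeshLt (δ : ℝ) : Prop :=
  ∀ i, i < d.n → d.points (i + 1) - d.points i < δ

def IsTagging (c : ℕ → ℝ) : Prop :=
  ∀ i, i < d.n → c i ∈ Icc (d.points i) (d.points (i + 1))

theorem isTagging_points : d.IsTagging d.points :=
  fun i hi => ⟨le_rfl, (d.increasing i hi).le⟩

variable {d} in
theorem IsTagging.mem_Icc {c : ℕ → ℝ} (hc : d.IsTagging c) {i : ℕ} (hi : i < d.n) :
    c i ∈ Icc a b :=
  ⟨(d.points_mem_Icc hi.le).1.trans (hc i hi).1, (hc i hi).2.trans (d.points_mem_Icc hi).2⟩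

theorem points_mem_Ico {i : ℕ} (hi : i < d.n) : d.points i ∈ Ico a b :=
  ⟨(d.points_mem_Icc hi.le).1, (d.points_lt_points_iff hi.le le_rfl).2 hi |>.trans_eq d.last_eq⟩

/-- The index `i` of the subinterval `[dᵢ, dᵢ₊₁)` containing `t` (meaningful for `t ∈ [a, b)`). -/
noncomputable def idx (t : ℝ) : ℕ :=
  Nat.findGreatest (fun i => d.points i ≤ t) (d.n - 1)

theorem idx_spec {t : ℝ} (ht : t ∈ Ico a b) :
    d.idx t < d.n ∧ d.points (d.idx t) ≤ t ∧ t < d.points (d.idx t + 1) := by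
  have hn : 0 < d.n := Nat.pos_of_ne_zero fun h => by
    have := d.last_eq; rw [h, d.first_eq] at this; linarith [ht.1, ht.2]
  have hle : d.idx t ≤ d.n - 1 := Nat.findGreatest_le _
  refine ⟨by omega, Nat.findGreatest_spec (P := fun i => d.points i ≤ t) (Nat.zero_le _)
    (by simpa [d.first_eq] using ht.1), ?_⟩
  rcases Nat.lt_or_ge (d.idx t) (d.n - 1) with h | h
  · exact lt_of_not_ge (Nat.findGreatest_is_greatest (P := fun i => d.points i ≤ t)
      (Nat.lt_succ_self _) (by omega))
  · rw [show d.idx t + 1 = d.n by omega, d.last_eq]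
    exact ht.2

theorem idx_eq_iff {t : ℝ} (ht : t ∈ Ico a b) {i : ℕ} (hi : i < d.n) :
    d.idx t = i ↔ d.points i ≤ t ∧ t < d.points (i + 1) := by
  obtain ⟨hlt, hle, hgt⟩ := d.idx_spec ht
  refine ⟨by rintro rfl; exact ⟨hle, hgt⟩, fun ⟨h₁, h₂⟩ => ?_⟩
  have : i < d.idx t + 1 := (d.points_lt_points_iff hi.le hlt).1 (h₁.trans_lt hgt)
  have : d.idx t < i + 1 := (d.points_lt_points_iff hlt.le hi).1 (hle.trans_lt h₂)
  omega

variable {d} in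
theorem abs_sub_lt_of_meshLt {δ : ℝ} (hd : d.MeshLt δ) {c : ℕ → ℝ} (hc : d.IsTagging c) {t : ℝ}
    (ht : t ∈ Ico a b) : |c (d.idx t) - t| < δ := by
  obtain ⟨hi, h₁, h₂⟩ := d.idx_spec ht
  have hmesh := hd _ hi
  obtain ⟨hc₁, hc₂⟩ := hc _ hi
  exact abs_sub_lt_iff.2 ⟨by linarith, by linarith⟩

def Refines (e d : RSPartition a b) : Prop :=
  ∀ i ≤ d.n, ∃ j ≤ e.n, e.points j = d.points i

noncomputable def ofFinset (F : Finset ℝ) (hF : ∀ x ∈ F, x ∈ Icc a b) (ha : a ∈ F) (hb : b ∈ F) :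
    RSPartition a b where
  n := F.card - 1
  points k := if h : k < F.card then F.orderEmbOfFin rfl ⟨k, h⟩ else b
  first_eq := by
    have hpos : 0 < F.card := Finset.card_pos.2 ⟨a, ha⟩
    rw [dif_pos hpos, Finset.orderEmbOfFin_zero rfl hpos]
    exact le_antisymm (F.min'_le a ha) (F.le_min' _ a fun x hx => (hF x hx).1)
  last_eq := by
    have hpos : 0 < F.card := Finset.card_pos.2 ⟨a, ha⟩
    rw [dif_pos (by omega), Finset.orderEmbOfFin_last rfl hpos]
    exact le_antisymm (F.max'_le _ b fun x hx => (hF x hx).2) (F.le_max' b hb)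
  increasing i hi := by
    rw [dif_pos (by omega), dif_pos (by omega)]
    exact (F.orderEmbOfFin rfl).strictMono (Fin.mk_lt_mk.2 (Nat.lt_succ_self i))

theorem exists_points_ofFinset_eq {F : Finset ℝ} (hF : ∀ x ∈ F, x ∈ Icc a b) (ha : a ∈ F)
    (hb : b ∈ F) {x : ℝ} (hx : x ∈ F) :
    ∃ j ≤ (ofFinset F hF ha hb).n, (ofFinset F hF ha hb).points j = x := by
  obtain ⟨⟨j, hj⟩, rfl⟩ : x ∈ Set.range (F.orderEmbOfFin rfl) := by simpa using hx
  exact ⟨j, by simp only [ofFinset]; omega, dif_pos hj⟩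

theorem exists_refines_refines (d₁ d₂ : RSPartition a b) :
    ∃ e : RSPartition a b, e.Refines d₁ ∧ e.Refines d₂ := by
  classical
  set F := (Finset.range (d₁.n + 1)).image d₁.points ∪ (Finset.range (d₂.n + 1)).image d₂.points
  have hF : ∀ x ∈ F, x ∈ Icc a b := by
    simp only [F, Finset.mem_union, Finset.mem_image, Finset.mem_range]
    rintro x (⟨i, hi, rfl⟩ | ⟨i, hi, rfl⟩)
    exacts [d₁.points_mem_Icc (by omega), d₂.points_mem_Icc (by omega)]
  have hd₁ : ∀ i ≤ d₁.n, d₁.points i ∈ F := fun i hi =>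
    Finset.mem_union_left _ (Finset.mem_image_of_mem _ (Finset.mem_range.2 (by omega)))
  have hd₂ : ∀ i ≤ d₂.n, d₂.points i ∈ F := fun i hi =>
    Finset.mem_union_right _ (Finset.mem_image_of_mem _ (Finset.mem_range.2 (by omega)))
  have ha : a ∈ F := d₁.first_eq ▸ hd₁ 0 (Nat.zero_le _)
  have hb : b ∈ F := d₁.last_eq ▸ hd₁ d₁.n le_rfl
  exact ⟨ofFinset F hF ha hb, fun i hi => exists_points_ofFinset_eq hF ha hb (hd₁ i hi),
    fun i hi => exists_points_ofFinset_eq hF ha hb (hd₂ i hi)⟩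

noncomputable def uniform (hab : a < b) (m : ℕ) : RSPartition a b where
  n := m + 1
  points i := a + i * ((b - a) / (m + 1))
  first_eq := by simp
  last_eq := by push_cast; field_simp; ring
  increasing i _ := by
    have : 0 < (b - a) / (m + 1) := div_pos (sub_pos.2 hab) (by positivity)
    push_cast
    linarith

theorem uniform_points_succ_sub (hab : a < b) (m i : ℕ) :
    (uniform hab m).points (i + 1) - (uniform hab m).points i = (b - a) / (m + 1) := by
  simp only [uniform]
  push_cast
  ring

theorem eventually_uniform_meshLt (hab : a < b) {δ : ℝ} (hδ : 0 < δ) :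
    ∀ᶠ m in atTop, (uniform hab m).MeshLt δ := by
  have : Tendsto (fun m : ℕ => (b - a) / ((m : ℝ) + 1)) atTop (𝓝 0) :=
    tendsto_const_div_atTop_nhds_zero_nat (b - a) |>.comp (tendsto_add_atTop_nat 1) |>.congr
      fun m => by simp
  filter_upwards [this.eventually_lt_const hδ] with m hm i _
  rwa [uniform_points_succ_sub]

end RSPartition

section RiemannStieltjesSum

variable {X Y : Type*} [AddCommGroup X] [Module ℝ X] [TopologicalSpace X]
  [AddCommGroup Y] [Module ℝ Y] [TopologicalSpace Y] {a b : ℝ} (α : ℝ → X →L[ℝ] Y)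

noncomputable def rsSum (d : RSPartition a b) (x : ℕ → X) : Y :=
  ∑ i ∈ Finset.range d.n, (α (d.points (i + 1)) (x i) - α (d.points i) (x i))

theorem rsSum_sub (d : RSPartition a b) (x x' : ℕ → X) :
    rsSum α d (fun i => x i - x' i) = rsSum α d x - rsSum α d x' := by
  simp only [rsSum, map_sub, ← Finset.sum_sub_distrib]
  exact Finset.sum_congr rfl fun _ _ => by abel

theorem rsSum_smul (d : RSPartition a b) (t : ℝ) (x : ℕ → X) :
    rsSum α d (fun i => t • x i) = t • rsSum α d x := by
  simp only [rsSum, map_smul, Finset.smul_sum, smul_sub]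

/-- Riemann–Stieltjes sums are unchanged by refinement when the values are kept constant on the
subintervals of the coarser partition. -/
theorem rsSum_comp_idx {d e : RSPartition a b} (he : e.Refines d) (x : ℕ → X) :
    rsSum α e (fun j => x (d.idx (e.points j))) = rsSum α d x := by
  classical
  have hmaps : ∀ j ∈ Finset.range e.n, d.idx (e.points j) ∈ Finset.range d.n := fun j hj =>
    Finset.mem_range.2 (d.idx_spec (e.points_mem_Ico (Finset.mem_range.1 hj))).1
  rw [rsSum, rsSum, ← Finset.sum_fiberwise_of_maps_to hmaps]
  refine Finset.sum_congr rfl fun i hi => ?_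
  rw [Finset.mem_range] at hi
  obtain ⟨j₀, hj₀, hp₀⟩ := he i hi.le
  obtain ⟨j₁, hj₁, hp₁⟩ := he (i + 1) hi
  have hj₀₁ : j₀ ≤ j₁ := (e.points_le_points_iff hj₀ hj₁).1 (hp₀ ▸ hp₁ ▸ (d.increasing i hi).le)
  have hfiber : {j ∈ Finset.range e.n | d.idx (e.points j) = i} = Finset.Ico j₀ j₁ := by
    ext j
    simp only [Finset.mem_filter, Finset.mem_range, Finset.mem_Ico]
    by_cases hj : j < e.n
    · rw [d.idx_eq_iff (e.points_mem_Ico hj) hi, ← hp₀, ← hp₁,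
        e.points_le_points_iff hj₀ hj.le, e.points_lt_points_iff hj.le hj₁]
      exact and_iff_right hj
    · constructor <;> intro h <;> omega
  calc ∑ j ∈ Finset.range e.n with d.idx (e.points j) = i,
        (α (e.points (j + 1)) (x (d.idx (e.points j))) - α (e.points j) (x (d.idx (e.points j))))
      = ∑ j ∈ Finset.Ico j₀ j₁, (α (e.points (j + 1)) (x i) - α (e.points j) (x i)) := by
        rw [← hfiber]
        exact Finset.sum_congr rfl fun j hj => by rw [(Finset.mem_filter.1 hj).2]
    _ = α (d.points (i + 1)) (x i) - α (d.points i) (x i) := by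
        rw [Finset.sum_Ico_sub (fun j => α (e.points j) (x i)) hj₀₁, hp₀, hp₁]

end RiemannStieltjesSum

theorem ContinuousOn.exists_seminorm_sub_lt {X : Type*} [AddCommGroup X] [Module ℝ X]
    [UniformSpace X] [IsUniformAddGroup X] {g : ℝ → X} {a b : ℝ} (hg : ContinuousOn g (Icc a b))
    {p : Seminorm ℝ X} (hp : Continuous p) {ε : ℝ} (hε : 0 < ε) :
    ∃ δ > 0, ∀ s ∈ Icc a b, ∀ t ∈ Icc a b, |s - t| < δ → p (g s - g t) < ε := by
  have hV : {v : X × X | p (v.2 - v.1) < ε} ∈ uniformity X := by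
    rw [uniformity_eq_comap_nhds_zero X]
    exact preimage_mem_comap ((isOpen_lt hp continuous_const).mem_nhds (by simpa))
  obtain ⟨δ, hδ, h⟩ := Metric.mem_uniformity_dist.1
    (mem_inf_principal.1 (isCompact_Icc.uniformContinuousOn_of_continuous hg hV))
  refine ⟨δ, hδ, fun s hs t ht hst => ?_⟩
  rw [map_sub_rev]
  exact h (by rwa [Real.dist_eq]) ⟨hs, ht⟩

theorem cauchySeq_of_seminorm_sub_lt {Y : Type*} [AddCommGroup Y] [Module ℝ Y] [UniformSpace Y]
    [IsUniformAddGroup Y] [ContinuousSMul ℝ Y] [LocallyConvexSpace ℝ Y] {u : ℕ → Y}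
    (h : ∀ q : Seminorm ℝ Y, Continuous q → ∀ ε > 0,
      ∀ᶠ mn : ℕ × ℕ in atTop, q (u mn.2 - u mn.1) < ε) :
    CauchySeq u := by
  rw [cauchySeq_iff_tendsto, uniformity_eq_comap_nhds_zero Y, tendsto_comap_iff,
    (PolynormableSpace.withSeminorms ℝ Y).tendsto_nhds]
  rintro ⟨q, hq⟩ ε hε
  simpa using h q hq ε hε

section Semivariation

variable {X Y : Type*} [AddCommGroup X] [Module ℝ X] [UniformSpace X]
  [AddCommGroup Y] [Module ℝ Y] [UniformSpace Y]
  {a b : ℝ} {α : ℝ → X →L[ℝ] Y} {q : Seminorm ℝ Y} {p : Seminorm ℝ X}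

theorem ofReal_seminorm_rsSum_le_SV (d : RSPartition a b) {x : ℕ → X}
    (hx : ∀ i, i < d.n → p (x i) ≤ 1) : ENNReal.ofReal (q (rsSum α d x)) ≤ SV α q p a b :=
  le_iSup_of_le d <| le_iSup_of_le x <| le_iSup_of_le hx le_rfl

theorem seminorm_rsSum_le (hSV : SV α q p a b ≠ ⊤) (d : RSPartition a b) {x : ℕ → X} {M : ℝ}
    (hM : 0 ≤ M) (hx : ∀ i, i < d.n → p (x i) ≤ M) :
    q (rsSum α d x) ≤ (SV α q p a b).toReal * M := by
  have hpos : ∀ M' > 0, (∀ i, i < d.n → p (x i) ≤ M') →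
      q (rsSum α d x) ≤ (SV α q p a b).toReal * M' := by
    intro M' hM' hx'
    have hunit : ∀ i, i < d.n → p (M'⁻¹ • x i) ≤ 1 := fun i hi => by
      rw [map_smul_eq_mul, Real.norm_of_nonneg (inv_nonneg.2 hM'.le), inv_mul_le_iff₀ hM', mul_one]
      exact hx' i hi
    have h := ENNReal.toReal_mono hSV (ofReal_seminorm_rsSum_le_SV d hunit)
    rwa [ENNReal.toReal_ofReal (apply_nonneg _ _), rsSum_smul, map_smul_eq_mul,
      Real.norm_of_nonneg (inv_nonneg.2 hM'.le), inv_mul_le_iff₀ hM', mul_comm] at h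
  have hlim : Tendsto (fun M' => (SV α q p a b).toReal * M') (𝓝[>] M)
      (𝓝 ((SV α q p a b).toReal * M)) :=
    ((continuous_const.mul continuous_id).tendsto M).mono_left nhdsWithin_le_nhds
  refine ge_of_tendsto hlim ?_
  filter_upwards [self_mem_nhdsWithin] with M' hM'
  exact hpos M' (hM.trans_lt hM') fun i hi => (hx i hi).trans hM'.le

/-- On a common refinement the two sums become one sum whose values are differences
`g(c₁) - g(c₂)` at tags less than `2δ` apart. -/
theorem seminorm_rsSum_sub_rsSum_le (hSV : SV α q p a b ≠ ⊤) {g : ℝ → X} {δ ε : ℝ} (hε : 0 ≤ ε)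
    (hg : ∀ s ∈ Icc a b, ∀ t ∈ Icc a b, |s - t| < 2 * δ → p (g s - g t) ≤ ε)
    {d₁ d₂ : RSPartition a b} (hd₁ : d₁.MeshLt δ) (hd₂ : d₂.MeshLt δ) {c₁ c₂ : ℕ → ℝ}
    (hc₁ : d₁.IsTagging c₁) (hc₂ : d₂.IsTagging c₂) :
    q (rsSum α d₁ (fun i => g (c₁ i)) - rsSum α d₂ (fun i => g (c₂ i)))
      ≤ (SV α q p a b).toReal * ε := by
  obtain ⟨e, he₁, he₂⟩ := RSPartition.exists_refines_refines d₁ d₂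
  rw [← rsSum_comp_idx α he₁, ← rsSum_comp_idx α he₂, ← rsSum_sub]
  refine seminorm_rsSum_le hSV e hε fun j hj => ?_
  have ht := e.points_mem_Ico hj
  refine hg _ (hc₁.mem_Icc (d₁.idx_spec ht).1) _ (hc₂.mem_Icc (d₂.idx_spec ht).1) ?_
  have h₁ := abs_sub_lt_iff.1 (RSPartition.abs_sub_lt_of_meshLt hd₁ hc₁ ht)
  have h₂ := abs_sub_lt_iff.1 (RSPartition.abs_sub_lt_of_meshLt hd₂ hc₂ ht)
  exact abs_sub_lt_iff.2 ⟨by linarith, by linarith⟩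

theorem BoundedSemivariation.exists_seminorm_rsSum_sub_rsSum_lt [IsUniformAddGroup X]
    (hα : BoundedSemivariation α a b) (hq : Continuous q) {g : ℝ → X}
    (hg : ContinuousOn g (Icc a b)) {ε : ℝ} (hε : 0 < ε) :
    ∃ δ > 0, ∀ (d₁ d₂ : RSPartition a b) (c₁ c₂ : ℕ → ℝ), d₁.MeshLt δ → d₂.MeshLt δ →
      d₁.IsTagging c₁ → d₂.IsTagging c₂ →
      q (rsSum α d₁ (fun i => g (c₁ i)) - rsSum α d₂ (fun i => g (c₂ i))) < ε := by
  obtain ⟨p, hp, hSV⟩ := hα q hq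
  set C := (SV α q p a b).toReal
  have hC : 0 ≤ C := ENNReal.toReal_nonneg
  obtain ⟨δ, hδ, hδg⟩ := hg.exists_seminorm_sub_lt hp (ε := ε / (C + 1)) (by positivity)
  refine ⟨δ / 2, half_pos hδ, fun d₁ d₂ c₁ c₂ hd₁ hd₂ hc₁ hc₂ => ?_⟩
  calc _ ≤ C * (ε / (C + 1)) := seminorm_rsSum_sub_rsSum_le hSV.ne (by positivity)
        (fun s hs t ht hst => (hδg s hs t ht (by linarith)).le) hd₁ hd₂ hc₁ hc₂
    _ < ε := by
        rw [mul_div_assoc', div_lt_iff₀ (by positivity)]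
        linarith

theorem exists_isRSIntegral [IsUniformAddGroup X] [IsUniformAddGroup Y] [ContinuousSMul ℝ Y]
    [LocallyConvexSpace ℝ Y] (hab : a < b) (hY : SequentiallyComplete Y)
    (hα : BoundedSemivariation α a b) {g : ℝ → X} (hg : ContinuousOn g (Icc a b)) :
    ∃ y, IsRSIntegral α g a b y := by
  let u : ℕ → Y := fun m =>
    rsSum α (RSPartition.uniform hab m) (fun i => g ((RSPartition.uniform hab m).points i))
  obtain ⟨y, hy⟩ := hY u <| cauchySeq_of_seminorm_sub_lt fun q hq ε hε => by
    obtain ⟨δ, hδ, hS⟩ := hα.exists_seminorm_rsSum_sub_rsSum_lt hq hg hε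
    have hfine := RSPartition.eventually_uniform_meshLt hab hδ
    rw [← prod_atTop_atTop_eq]
    exact (hfine.prod_mk hfine).mono fun mn ⟨h₁, h₂⟩ =>
      hS _ _ _ _ h₂ h₁ (RSPartition.isTagging_points _) (RSPartition.isTagging_points _)
  refine ⟨y, fun q hq ε hε => ?_⟩
  obtain ⟨δ, hδ, hS⟩ := hα.exists_seminorm_rsSum_sub_rsSum_lt hq hg (half_pos hε)
  refine ⟨δ, hδ, fun d c hd hc => ?_⟩
  have hlim :=
    (PolynormableSpace.withSeminorms ℝ Y).tendsto_nhds u y |>.1 hy ⟨q, hq⟩ _ (half_pos hε)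
  obtain ⟨m, hm, hmy⟩ := ((RSPartition.eventually_uniform_meshLt hab hδ).and hlim).exists
  have hdm := hS _ _ _ _ hd hm hc (RSPartition.isTagging_points _)
  calc q (rsSum α d (fun i => g (c i)) - y)
      ≤ q (rsSum α d (fun i => g (c i)) - u m) + q (u m - y) := by
        simpa using map_add_le_add q (rsSum α d (fun i => g (c i)) - u m) (u m - y)
    _ < ε := by linarith

theorem IsRSIntegral.seminorm_le (hab : a < b) {g : ℝ → X} {y : Y} (hy : IsRSIntegral α g a b y)
    (hq : Continuous q) (hSV : SV α q p a b ≠ ⊤) {M : ℝ} (hM : ∀ s ∈ Icc a b, p (g s) ≤ M) :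
    q y ≤ (SV α q p a b).toReal * M := by
  have hM₀ : 0 ≤ M := (apply_nonneg p _).trans (hM a (left_mem_Icc.2 hab.le))
  refine le_of_forall_pos_le_add fun η hη => ?_
  obtain ⟨δ, hδ, hyδ⟩ := hy q hq η hη
  obtain ⟨m, hm⟩ := (RSPartition.eventually_uniform_meshLt hab hδ).exists
  set d := RSPartition.uniform hab m
  set S := rsSum α d (fun i => g (d.points i))
  have hSy : q (S - y) < η := hyδ d d.points hm d.isTagging_points
  have hS : q S ≤ (SV α q p a b).toReal * M :=
    seminorm_rsSum_le hSV d hM₀ fun i hi => hM _ (d.points_mem_Icc hi.le)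
  calc q y = q (S - (S - y)) := by rw [sub_sub_cancel]
    _ ≤ q S + q (S - y) := map_sub_le_add q _ _
    _ ≤ (SV α q p a b).toReal * M + η := by linarith

end Semivariation

theorem stmt0_general {X Y : Type*} [AddCommGroup X] [Module ℝ X] [UniformSpace X] [IsUniformAddGroup X]
    [AddCommGroup Y] [Module ℝ Y] [UniformSpace Y] [IsUniformAddGroup Y]
    [ContinuousSMul ℝ Y] [LocallyConvexSpace ℝ Y]
    (a b : ℝ) (hab : a < b) (hY : SequentiallyComplete Y)
    (f : ℝ → X) (hf : ContinuousOn f (Set.Icc a b))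
    (α : ℝ → X →L[ℝ] Y) (hα : BoundedSemivariation α a b) :
    (∃ y : Y, IsRSIntegral α f a b y) ∧
    (∀ q : Seminorm ℝ Y, Continuous ⇑q →
      ∃ p : Seminorm ℝ X, Continuous ⇑p ∧ SV α q p a b < ⊤ ∧
        ∀ g : ℝ → X, ContinuousOn g (Set.Icc a b) →
          ∀ M : ℝ, (∀ s ∈ Set.Icc a b, p (g s) ≤ M) →
            q (RSIntegral α g a b) ≤ (SV α q p a b).toReal * M) := by
  refine ⟨exists_isRSIntegral hab hY hα hf, fun q hq => ?_⟩
  obtain ⟨p, hp, hSV⟩ := hα q hq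
  refine ⟨p, hp, hSV, fun g hg M hM => ?_⟩
  have hex := exists_isRSIntegral hab hY hα hg
  rw [RSIntegral, dif_pos hex]
  exact hex.choose_spec.seminorm_le hab hq hSV.ne hM

theorem stmt0 {X Y : Type*} [AddCommGroup X] [Module ℝ X] [UniformSpace X] [IsUniformAddGroup X]
    [ContinuousSMul ℝ X] [LocallyConvexSpace ℝ X] [T2Space X]
    [AddCommGroup Y] [Module ℝ Y] [UniformSpace Y] [IsUniformAddGroup Y]
    [ContinuousSMul ℝ Y] [LocallyConvexSpace ℝ Y] [T2Space Y]
    (a b : ℝ) (hab : a < b) (hY : SequentiallyComplete Y)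
    (f : ℝ → X) (hf : ContinuousOn f (Set.Icc a b))
    (α : ℝ → X →L[ℝ] Y) (hα : BoundedSemivariation α a b) :
    (∃ y : Y, IsRSIntegral α f a b y) ∧
    (∀ q : Seminorm ℝ Y, Continuous ⇑q →
      ∃ p : Seminorm ℝ X, Continuous ⇑p ∧ SV α q p a b < ⊤ ∧
        ∀ g : ℝ → X, ContinuousOn g (Set.Icc a b) →
          ∀ M : ℝ, (∀ s ∈ Set.Icc a b, p (g s) ≤ M) →
            q (RSIntegral α g a b) ≤ (SV α q p a b).toReal * M) :=
  stmt0_general a b hab hY f hf α hα
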